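/- arXiv:1310.3253 — 2 statements merged into one kernel-verified Lean document; each statement's English description precedes it below -/
import Mathlib

section
/- The Izergin determinant transforms under q → q⁻¹ as: K^{(l)}_{n,q⁻¹}(ȳ | x̄) = K^{(r)}_{n,q}(x̄ | ȳ), where K^{(l)}_n(x̄|ȳ) = (∏ᵢ xᵢ)·K_n(x̄|ȳ) and K^{(r)}_n(x̄|ȳ) = (∏ᵢ yᵢ)·K_n(x̄|ȳ). -/
open Finset

/-- The Izergin determinant `K_n(x̄ | ȳ)`. -/
noncomputable def Kiz (q : ℂ) {n : ℕ} (x y : Fin n → ℂ) : ℂ :=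
  ((∏ i, ∏ j, (q * x i - q⁻¹ * y j)) /
      ∏ i, ∏ j, (if i < j then (x i - x j) * (y j - y i) else 1)) *
    Matrix.det (Matrix.of fun i j : Fin n =>
      (q - q⁻¹) / ((x i - y j) * (q * x i - q⁻¹ * y j)))

/-- The left modified Izergin determinant `K^{(l)}_n(x̄|ȳ) = (∏ xᵢ) K_n(x̄|ȳ)`. -/
noncomputable def KizL (q : ℂ) {n : ℕ} (x y : Fin n → ℂ) : ℂ :=
  (∏ i, x i) * Kiz q x y

/-- The right modified Izergin determinant `K^{(r)}_n(x̄|ȳ) = (∏ yᵢ) K_n(x̄|ȳ)`. -/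
noncomputable def KizR (q : ℂ) {n : ℕ} (x y : Fin n → ℂ) : ℂ :=
  (∏ i, y i) * Kiz q x y

/-- `K^{(l)}_{n,q⁻¹}(ȳ|x̄) = K^{(r)}_{n,q}(x̄|ȳ)`. -/
theorem KizL_qinv_swap (q : ℂ) (hq : q ≠ 0) (n : ℕ) (x y : Fin n → ℂ)
    (hx : Function.Injective x) (hy : Function.Injective y)
    (hxy : ∀ i j, x i ≠ y j) (hgen : ∀ i j, q * x i ≠ q⁻¹ * y j) :
    KizL q⁻¹ y x = KizR q x y := by
  have key : Kiz q⁻¹ y x = Kiz q x y := by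
    unfold Kiz
    rw [inv_inv]
    have hnum : (∏ i, ∏ j, (q⁻¹ * y i - q * x j))
        = (-1 : ℂ) ^ (n * n) * ∏ i, ∏ j, (q * x i - q⁻¹ * y j) := by
      have h1 : ∀ i j : Fin n, q⁻¹ * y i - q * x j = (-1) * (q * x j - q⁻¹ * y i) := by
        intro i j; ring
      simp_rw [h1, Finset.prod_mul_distrib, Finset.prod_const, Finset.card_univ,
        Fintype.card_fin]
      rw [Finset.prod_comm, pow_mul]
    have hden : (∏ i, ∏ j, (if i < j then (y i - y j) * (x j - x i) else 1))
        = ∏ i, ∏ j, (if i < j then (x i - x j) * (y j - y i) else 1) := by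
      apply Finset.prod_congr rfl; intro i _
      apply Finset.prod_congr rfl; intro j _
      by_cases h : i < j <;> simp [h] <;> ring
    have hdet : Matrix.det (Matrix.of fun i j : Fin n =>
          (q⁻¹ - q) / ((y i - x j) * (q⁻¹ * y i - q * x j)))
        = (-1 : ℂ) ^ n * Matrix.det (Matrix.of fun i j : Fin n =>
          (q - q⁻¹) / ((x i - y j) * (q * x i - q⁻¹ * y j))) := by
      have hM : (Matrix.of fun i j : Fin n =>
            (q⁻¹ - q) / ((y i - x j) * (q⁻¹ * y i - q * x j)))
          = (-1 : ℂ) • (Matrix.of fun i j : Fin n =>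
            (q - q⁻¹) / ((x i - y j) * (q * x i - q⁻¹ * y j))).transpose := by
        ext i j
        simp only [Matrix.of_apply, Matrix.smul_apply, Matrix.transpose_apply,
          smul_eq_mul, neg_one_mul]
        rw [show (y i - x j) * (q⁻¹ * y i - q * x j)
            = (x j - y i) * (q * x j - q⁻¹ * y i) from by ring,
          show q⁻¹ - q = -(q - q⁻¹) from by ring, neg_div]
      rw [hM, Matrix.det_smul, Matrix.det_transpose]
      simp [Fintype.card_fin]
    rw [hnum, hden, hdet]
    have hsign : (-1 : ℂ) ^ (n * n) * (-1 : ℂ) ^ n = 1 := by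
      rw [← pow_add]
      exact Even.neg_one_pow (by rw [← Nat.mul_succ]; exact Nat.even_mul_succ_self n)
    set N := ∏ i, ∏ j, (q * x i - q⁻¹ * y j) with hN
    set D := ∏ i, ∏ j, (if i < j then (x i - x j) * (y j - y i) else 1) with hD
    set d := Matrix.det (Matrix.of fun i j : Fin n =>
      (q - q⁻¹) / ((x i - y j) * (q * x i - q⁻¹ * y j))) with hd
    calc ((-1:ℂ)^(n*n) * N / D) * ((-1:ℂ)^n * d)
        = ((-1:ℂ)^(n*n) * (-1:ℂ)^n) * (N / D * d) := by ring
      _ = N / D * d := by rw [hsign, one_mul]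
  rw [KizL, KizR, key]
end

section
/- The Izergin determinant transforms under inversion of arguments as: K^{(l)}_{n,q⁻¹}(x̄⁻¹ | ȳ⁻¹) = K^{(r)}_{n,q}(x̄ | ȳ), where x̄⁻¹ = (x₁⁻¹,…,xₙ⁻¹) and ȳ⁻¹ = (y₁⁻¹,…,yₙ⁻¹). -/
open Finset


lemma prod_pairs {n : ℕ} (z : Fin n → ℂ) :
    (∏ i, ∏ j, (if i < j then z i * z j else 1)) = (∏ i, z i) ^ (n - 1) := by
  have h1 : (∏ i, ∏ j, (if i < j then z i * z j else 1))
      = (∏ i, ∏ j, (if i < j then z i else 1)) * (∏ i, ∏ j, (if i < j then z j else 1)) := by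
    rw [← Finset.prod_mul_distrib]
    refine Finset.prod_congr rfl fun i _ => ?_
    rw [← Finset.prod_mul_distrib]
    refine Finset.prod_congr rfl fun j _ => ?_
    split <;> simp
  have hIoi : ∀ i : Fin n, univ.filter (fun j => i < j) = Ioi i := by
    intro i; ext j; simp
  have hIio : ∀ j : Fin n, univ.filter (fun i => i < j) = Iio j := by
    intro j; ext i; simp
  have h2 : ∀ i : Fin n, (∏ j, (if i < j then z i else 1)) = z i ^ (n - 1 - (i : ℕ)) := by
    intro i
    rw [Finset.prod_ite, Finset.prod_const, Finset.prod_const_one, mul_one, hIoi, Fin.card_Ioi]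
  have h3 : (∏ i, ∏ j, (if i < j then z j else 1)) = ∏ j, z j ^ (j : ℕ) := by
    rw [Finset.prod_comm]
    refine Finset.prod_congr rfl fun j _ => ?_
    rw [Finset.prod_ite, Finset.prod_const, Finset.prod_const_one, mul_one, hIio, Fin.card_Iio]
  rw [h1, h3, Finset.prod_congr rfl (fun i _ => h2 i), ← Finset.prod_mul_distrib]
  rw [← Finset.prod_pow]
  refine Finset.prod_congr rfl fun i _ => ?_
  rw [← pow_add]; congr 1; omega

lemma pt1 (q a b : ℂ) (ha : a ≠ 0) (hb : b ≠ 0) :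
    q⁻¹ * a⁻¹ - q * b⁻¹ = (-1) * (a⁻¹ * (b⁻¹ * (q * a - q⁻¹ * b))) := by
  linear_combination q * b⁻¹ * mul_inv_cancel₀ ha - q⁻¹ * a⁻¹ * mul_inv_cancel₀ hb

lemma pt2 (a b c d : ℂ) (ha : a ≠ 0) (hb : b ≠ 0) (hc : c ≠ 0) (hd : d ≠ 0) :
    (a⁻¹ - b⁻¹) * (d⁻¹ - c⁻¹) = (a * c)⁻¹ * (b * d)⁻¹ * ((a - b) * (d - c)) := by
  rw [mul_inv, mul_inv]
  linear_combination (-(b⁻¹*c⁻¹*(d*d⁻¹)) + b⁻¹*d⁻¹*(c*c⁻¹)) * mul_inv_cancel₀ ha +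
    (a⁻¹*c⁻¹*(d*d⁻¹) - a⁻¹*d⁻¹*(c*c⁻¹)) * mul_inv_cancel₀ hb +
    (a⁻¹*c⁻¹ - b⁻¹*c⁻¹) * mul_inv_cancel₀ hd +
    (b⁻¹*d⁻¹ - a⁻¹*d⁻¹) * mul_inv_cancel₀ hc

lemma pt3 (q a b : ℂ) (ha : a ≠ 0) (hb : b ≠ 0)
    (h1 : a - b ≠ 0) (h2 : q * a - q⁻¹ * b ≠ 0) :
    (q⁻¹ - q) / ((a⁻¹ - b⁻¹) * (q⁻¹ * a⁻¹ - q * b⁻¹)) =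
      -a ^ 2 * (b ^ 2 * ((q - q⁻¹) / ((a - b) * (q * a - q⁻¹ * b)))) := by
  have e1 : a⁻¹ - b⁻¹ = -((a - b) * (a⁻¹ * b⁻¹)) := by
    linear_combination b⁻¹ * mul_inv_cancel₀ ha - a⁻¹ * mul_inv_cancel₀ hb
  have e2 : q⁻¹ * a⁻¹ - q * b⁻¹ = -((q * a - q⁻¹ * b) * (a⁻¹ * b⁻¹)) := by
    linear_combination q * b⁻¹ * mul_inv_cancel₀ ha - q⁻¹ * a⁻¹ * mul_inv_cancel₀ hb
  rw [e1, e2]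
  have e3 : -((a - b) * (a⁻¹ * b⁻¹)) * -((q * a - q⁻¹ * b) * (a⁻¹ * b⁻¹)) =
      (a⁻¹ * b⁻¹) ^ 2 * ((a - b) * (q * a - q⁻¹ * b)) := by ring
  rw [e3, ← div_div, ← mul_inv, inv_pow, div_inv_eq_mul]
  have e4 : -a ^ 2 * (b ^ 2 * ((q - q⁻¹) / ((a - b) * (q * a - q⁻¹ * b)))) =
      (-a ^ 2 * (b ^ 2 * (q - q⁻¹))) / ((a - b) * (q * a - q⁻¹ * b)) := by
    rw [mul_div_assoc, mul_div_assoc]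
  rw [e4, div_eq_div_iff (mul_ne_zero h1 h2) (mul_ne_zero h1 h2)]
  ring

lemma key_field (m : ℕ) (e1 e2 Px Py A B D : ℂ) (he : e1 * e2 = 1)
    (hPx : Px ≠ 0) (hPy : Py ≠ 0) :
    Px⁻¹ * ((e1 * ((Px⁻¹) ^ (m+1) * ((Py⁻¹) ^ (m+1) * A)) /
      ((Px⁻¹ * Py⁻¹) ^ m * B)) * (e2 * (Px ^ 2 * (Py ^ 2 * D)))) =
    Py * (A / B * D) := by
  have d1 : ((Px⁻¹ * Py⁻¹) ^ m * B)⁻¹ = (Px * Py) ^ m * B⁻¹ := by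
    rw [mul_inv, ← mul_inv Px Py, inv_pow, inv_inv]
  have h : Px⁻¹ * ((e1 * ((Px⁻¹) ^ (m+1) * ((Py⁻¹) ^ (m+1) * A)) /
      ((Px⁻¹ * Py⁻¹) ^ m * B)) * (e2 * (Px ^ 2 * (Py ^ 2 * D)))) =
      (e1 * e2) * (Py * (A / B * D)) := by
    rw [div_eq_mul_inv, d1, div_eq_mul_inv A B]
    calc Px⁻¹ * (e1 * (Px⁻¹ ^ (m + 1) * (Py⁻¹ ^ (m + 1) * A)) * ((Px * Py) ^ m * B⁻¹) *
          (e2 * (Px ^ 2 * (Py ^ 2 * D))))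
        = ((Px * Px⁻¹) ^ (m + 2) * (Py * Py⁻¹) ^ (m + 1)) *
            ((e1 * e2) * (Py * (A * B⁻¹ * D))) := by ring
      _ = (e1 * e2) * (Py * (A * B⁻¹ * D)) := by
          rw [mul_inv_cancel₀ hPx, mul_inv_cancel₀ hPy, one_pow, one_pow, one_mul, one_mul]
  rw [h, he, one_mul]

/-- `K^{(l)}_{n,q⁻¹}(x̄⁻¹|ȳ⁻¹) = K^{(r)}_{n,q}(x̄|ȳ)`. -/
theorem KizL_qinv_inv (q : ℂ) (hq : q ≠ 0) (n : ℕ) (x y : Fin n → ℂ)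
    (hx0 : ∀ i, x i ≠ 0) (hy0 : ∀ i, y i ≠ 0)
    (hx : Function.Injective x) (hy : Function.Injective y)
    (hxy : ∀ i j, x i ≠ y j) (hgen : ∀ i j, q * x i ≠ q⁻¹ * y j) :
    KizL q⁻¹ (fun i => (x i)⁻¹) (fun i => (y i)⁻¹) = KizR q x y := by
  obtain _ | m := n
  · simp [KizL, KizR, Kiz]
  have hPx : (∏ i, x i) ≠ 0 := Finset.prod_ne_zero_iff.mpr fun i _ => hx0 i
  have hPy : (∏ i, y i) ≠ 0 := Finset.prod_ne_zero_iff.mpr fun i _ => hy0 i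
  simp only [KizL, KizR, Kiz, inv_inv]
  have hXinv : (∏ i : Fin (m+1), (x i)⁻¹) = (∏ i, x i)⁻¹ := by
    rw [Finset.prod_inv_distrib]
  have hP : (∏ i : Fin (m+1), ∏ j, (q⁻¹ * (x i)⁻¹ - q * (y j)⁻¹)) =
      (-1 : ℂ) ^ ((m+1) * (m+1)) * ((∏ i, x i)⁻¹ ^ (m+1) * ((∏ i, y i)⁻¹ ^ (m+1) *
        ∏ i, ∏ j, (q * x i - q⁻¹ * y j))) := by
    calc (∏ i : Fin (m+1), ∏ j, (q⁻¹ * (x i)⁻¹ - q * (y j)⁻¹))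
        = ∏ i : Fin (m+1), ∏ j, ((-1) * ((x i)⁻¹ * ((y j)⁻¹ * (q * x i - q⁻¹ * y j)))) :=
          Finset.prod_congr rfl fun i _ => Finset.prod_congr rfl fun j _ =>
            pt1 q (x i) (y j) (hx0 i) (hy0 j)
      _ = (-1 : ℂ) ^ ((m+1) * (m+1)) * ((∏ i, x i)⁻¹ ^ (m+1) * ((∏ i, y i)⁻¹ ^ (m+1) *
            ∏ i, ∏ j, (q * x i - q⁻¹ * y j))) := by
          simp only [Finset.prod_mul_distrib, Finset.prod_const, Finset.card_univ,
            Fintype.card_fin, Finset.prod_pow, Finset.prod_inv_distrib, pow_mul]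
  have hQ : (∏ i : Fin (m+1), ∏ j,
        (if i < j then ((x i)⁻¹ - (x j)⁻¹) * ((y j)⁻¹ - (y i)⁻¹) else 1)) =
      ((∏ i, x i)⁻¹ * (∏ i, y i)⁻¹) ^ m *
        ∏ i, ∏ j, (if i < j then (x i - x j) * (y j - y i) else 1) := by
    calc (∏ i : Fin (m+1), ∏ j,
          (if i < j then ((x i)⁻¹ - (x j)⁻¹) * ((y j)⁻¹ - (y i)⁻¹) else 1))
        = ∏ i : Fin (m+1), ∏ j, ((if i < j then (x i * y i)⁻¹ * (x j * y j)⁻¹ else 1) *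
            (if i < j then (x i - x j) * (y j - y i) else 1)) := by
          refine Finset.prod_congr rfl fun i _ => Finset.prod_congr rfl fun j _ => ?_
          by_cases h : i < j
          · simp only [if_pos h]
            exact pt2 (x i) (x j) (y i) (y j) (hx0 i) (hx0 j) (hy0 i) (hy0 j)
          · simp [h]
      _ = (∏ i : Fin (m+1), ∏ j, (if i < j then (x i * y i)⁻¹ * (x j * y j)⁻¹ else 1)) *
            ∏ i, ∏ j, (if i < j then (x i - x j) * (y j - y i) else 1) := by
          simp only [Finset.prod_mul_distrib]
      _ = ((∏ i, x i)⁻¹ * (∏ i, y i)⁻¹) ^ m *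
            ∏ i, ∏ j, (if i < j then (x i - x j) * (y j - y i) else 1) := by
          rw [prod_pairs (fun k => (x k * y k)⁻¹)]
          have hbase : (∏ k : Fin (m+1), (x k * y k)⁻¹) = (∏ i, x i)⁻¹ * (∏ i, y i)⁻¹ := by
            simp only [mul_inv, Finset.prod_mul_distrib, Finset.prod_inv_distrib]
          rw [hbase]
          norm_num
  have hD : Matrix.det (Matrix.of fun i j : Fin (m+1) =>
        (q⁻¹ - q) / (((x i)⁻¹ - (y j)⁻¹) * (q⁻¹ * (x i)⁻¹ - q * (y j)⁻¹))) =
      (-1 : ℂ) ^ (m+1) * ((∏ i, x i) ^ 2 * ((∏ i, y i) ^ 2 *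
        Matrix.det (Matrix.of fun i j : Fin (m+1) =>
          (q - q⁻¹) / ((x i - y j) * (q * x i - q⁻¹ * y j))))) := by
    have e1 : (Matrix.of fun i j : Fin (m+1) =>
          (q⁻¹ - q) / (((x i)⁻¹ - (y j)⁻¹) * (q⁻¹ * (x i)⁻¹ - q * (y j)⁻¹)))
        = Matrix.of (fun i j => (-(x i) ^ 2) *
            ((Matrix.of fun i' j' : Fin (m+1) => ((y j') ^ 2) *
              ((Matrix.of fun i'' j'' : Fin (m+1) =>
                (q - q⁻¹) / ((x i'' - y j'') * (q * x i'' - q⁻¹ * y j''))) i' j')) i j)) := by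
      ext i j
      simp only [Matrix.of_apply]
      exact pt3 q (x i) (y j) (hx0 i) (hy0 j)
        (sub_ne_zero.mpr (hxy i j)) (sub_ne_zero.mpr (hgen i j))
    rw [e1, Matrix.det_mul_column, Matrix.det_mul_row]
    have hv : (∏ i : Fin (m+1), -(x i) ^ 2) = (-1 : ℂ) ^ (m+1) * (∏ i, x i) ^ 2 := by
      calc (∏ i : Fin (m+1), -(x i) ^ 2) = ∏ i : Fin (m+1), ((-1) * (x i) ^ 2) := by
            refine Finset.prod_congr rfl fun i _ => by ring
        _ = (-1 : ℂ) ^ (m+1) * (∏ i, x i) ^ 2 := by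
            rw [Finset.prod_mul_distrib, Finset.prod_const, Finset.card_univ,
              Fintype.card_fin, Finset.prod_pow]
    have hw : (∏ j : Fin (m+1), (y j) ^ 2) = (∏ j, y j) ^ 2 := Finset.prod_pow _ _ _
    rw [hv, hw]
    ring
  rw [hXinv, hP, hQ, hD]
  exact key_field m _ _ _ _ _ _ _
    (by
      rw [← pow_add]
      refine Even.neg_one_pow ?_
      have h5 : (m+1) * (m+1) + (m+1) = (m+1) * ((m+1) + 1) := by ring
      rw [h5]
      exact Nat.even_mul_succ_self (m+1))
    hPx hPy
end
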